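/- Let k ≥ 2 be an integer and let x₀, x₁, x₂, x₃ be i.i.d. random variables uniformly distributed on {1, 2, ..., k}. Then E(|x₁ - x₀| · |x₂ - x₁| · |x₃ - x₂|) = (k - 1)(k + 1)(17k⁴ - 39k² + 24)/(420k³). -/

import Mathlib

/-!
By independence the law of `(x₀, x₁, x₂, x₃)` is the fourfold product of the uniform law, so the
expectation is `k⁻⁴` times the sum of `|b - a| |c - b| |d - c|` over `{1, …, k}⁴`. Summing out the
endpoint `a` leaves `g b = ∑ₐ |b - a| = b² - (k + 1) b + k (k + 1) / 2`, summing out `d` and then `c`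
leaves a quartic in `b`, and the last sum over `b` is a polynomial sum. Every sum of
`|b - a| f a` is split at `b` by `|t| = 2 max t 0 - t` into two polynomial sums over initial
segments, which are evaluated by telescoping.
-/

open MeasureTheory ProbabilityTheory
open scoped ENNReal

/-- The uniform probability measure on the integers `{1, ..., k}` (as a measure on `ℕ`). -/
noncomputable def unifMeasure (k : ℕ) : Measure ℕ :=
  (k : ℝ≥0∞)⁻¹ • ∑ i ∈ Finset.Icc 1 k, Measure.dirac i

open Finset

section Uniform

variable {β E : Type*} [MeasurableSpace β] [NormedAddCommGroup E]

theorem unifMeasure_prod (k : ℕ) (ρ : Measure β) [SFinite ρ] :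
    (unifMeasure k).prod ρ = (k : ℝ≥0∞)⁻¹ • ∑ i ∈ Icc 1 k, ρ.map (Prod.mk i) := by
  ext s hs
  simp [unifMeasure, Measure.prod_apply hs, Measure.map_apply measurable_prodMk_left hs]

theorem integrable_unifMeasure (k : ℕ) (f : ℕ → E) : Integrable f (unifMeasure k) := by
  rcases eq_or_ne k 0 with rfl | hk
  · simp [unifMeasure]
  exact (integrable_finsetSum_measure.2 fun i _ => integrable_dirac enorm_lt_top).smul_measure
    (by simpa using hk)

theorem integral_unifMeasure [NormedSpace ℝ E] [CompleteSpace E] (k : ℕ) (f : ℕ → E) :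
    ∫ i, f i ∂unifMeasure k = (k : ℝ)⁻¹ • ∑ i ∈ Icc 1 k, f i := by
  rw [unifMeasure, integral_smul_measure,
    integral_finsetSum_measure fun i _ => integrable_dirac enorm_lt_top]
  simp

theorem integrable_unifMeasure_prod {k : ℕ} {ρ : Measure β} [SFinite ρ] {f : ℕ × β → E}
    (hf : ∀ i, Integrable (fun y => f (i, y)) ρ) : Integrable f ((unifMeasure k).prod ρ) := by
  rcases eq_or_ne k 0 with rfl | hk
  · simp [unifMeasure]
  rw [unifMeasure_prod]
  exact (integrable_finsetSum_measure.2 fun i _ =>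
    (measurableEmbedding_prodMk_left i).integrable_map_iff.2 (hf i)).smul_measure
    (by simpa using hk)

theorem integral_unifMeasure_prod [NormedSpace ℝ E] (k : ℕ) {ρ : Measure β} [SFinite ρ]
    {f : ℕ × β → E} (hf : ∀ i, Integrable (fun y => f (i, y)) ρ) :
    ∫ p, f p ∂(unifMeasure k).prod ρ = (k : ℝ)⁻¹ • ∑ i ∈ Icc 1 k, ∫ y, f (i, y) ∂ρ := by
  rw [unifMeasure_prod, integral_smul_measure, integral_finsetSum_measure fun i _ =>
    (measurableEmbedding_prodMk_left i).integrable_map_iff.2 (hf i)]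
  simp [(measurableEmbedding_prodMk_left _).integral_map]

end Uniform

theorem ProbabilityTheory.iIndepFun.map_tuple_eq_prod_map {Ω α : Type*} [MeasurableSpace Ω]
    [MeasurableSpace α] [Countable α] [MeasurableSingletonClass α] {μ : Measure Ω}
    {x : Fin 4 → Ω → α} (hindep : iIndepFun x μ) (hmeas : ∀ i, Measurable (x i)) :
    μ.map (fun ω => (x 0 ω, x 1 ω, x 2 ω, x 3 ω))
      = (μ.map (x 0)).prod ((μ.map (x 1)).prod ((μ.map (x 2)).prod (μ.map (x 3)))) := by
  refine Measure.ext_of_singleton fun ⟨a, b, c, d⟩ => ?_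
  have hpre : (fun ω => (x 0 ω, x 1 ω, x 2 ω, x 3 ω)) ⁻¹' {(a, b, c, d)}
      = ⋂ i, x i ⁻¹' {![a, b, c, d] i} := by
    ext ω
    simp [Fin.forall_fin_succ]
  rw [Measure.map_apply (by fun_prop) (measurableSet_singleton _), hpre,
    hindep.meas_iInter fun i => ⟨_, measurableSet_singleton _, rfl⟩, Fin.prod_univ_four,
    ← Set.singleton_prod_singleton, Measure.prod_prod, ← Set.singleton_prod_singleton,
    Measure.prod_prod, ← Set.singleton_prod_singleton, Measure.prod_prod]
  simp [Measure.map_apply (hmeas _) (measurableSet_singleton _), mul_assoc]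

theorem sum_Icc_one_induction {M : Type*} [AddCommMonoid M] (f s : ℕ → M) (h0 : s 0 = 0)
    (h : ∀ n, s (n + 1) = s n + f (n + 1)) (n : ℕ) : ∑ i ∈ Icc 1 n, f i = s n := by
  induction n with
  | zero => simp [h0]
  | succ n ih => rw [sum_Icc_succ_top (by omega), ih, h]

theorem sum_Icc_abs_sub_mul {k b : ℕ} (hb : b ≤ k) (f : ℕ → ℝ) :
    ∑ a ∈ Icc 1 k, |(b : ℝ) - a| * f a
      = 2 * ∑ a ∈ Icc 1 b, ((b : ℝ) - a) * f a - ∑ a ∈ Icc 1 k, ((b : ℝ) - a) * f a := by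
  have hmax : ∑ a ∈ Icc 1 k, max ((b : ℝ) - a) 0 * f a = ∑ a ∈ Icc 1 b, ((b : ℝ) - a) * f a := by
    rw [← sum_subset (Icc_subset_Icc_right hb)]
    · refine sum_congr rfl fun a ha => ?_
      rw [max_eq_left (by simpa using (mem_Icc.1 ha).2)]
    · intro a ha hab
      have : b < a := by simp only [mem_Icc, not_and, not_le] at ha hab; exact hab ha.1
      rw [max_eq_right (by simpa using this.le), zero_mul]
  rw [← hmax, mul_sum, ← sum_sub_distrib]
  refine sum_congr rfl fun a _ => ?_
  rcases le_total 0 ((b : ℝ) - a) with h | h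
  · rw [abs_of_nonneg h, max_eq_left h]; ring
  · rw [abs_of_nonpos h, max_eq_right h]; ring

theorem sum_Icc_abs_sub {k b : ℕ} (hb : b ≤ k) :
    ∑ a ∈ Icc 1 k, |(b : ℝ) - a| = (b : ℝ) ^ 2 - (k + 1) * b + k * (k + 1) / 2 := by
  have hsum (x : ℝ) (n : ℕ) : ∑ a ∈ Icc 1 n, (x - a) * 1 = n * x - n * (n + 1) / 2 := by
    apply sum_Icc_one_induction <;> intros <;> push_cast <;> ring
  rw [← sum_congr rfl fun (a : ℕ) _ => mul_one |(b : ℝ) - a|, sum_Icc_abs_sub_mul hb, hsum, hsum]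
  ring

/-- `2 * b - k - 1` is twice the offset of `b` from the midpoint of `{1, …, k}`. -/
theorem sum_Icc_abs_sub_mul_sum_abs_sub {k b : ℕ} (hb : b ≤ k) :
    ∑ c ∈ Icc 1 k, |(c : ℝ) - b| * ∑ d ∈ Icc 1 k, |(d : ℝ) - c|
      = ((2 * b - k - 1) ^ 4 + (6 * k ^ 2 - 10) * (2 * b - k - 1) ^ 2 + 9 * (k ^ 2 - 1) ^ 2)
        / 96 := by
  have hg : ∀ c ∈ Icc 1 k, |(c : ℝ) - b| * ∑ d ∈ Icc 1 k, |(d : ℝ) - c|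
      = |(b : ℝ) - c| * ((c : ℝ) ^ 2 - (k + 1) * c + k * (k + 1) / 2) := by
    intro c hc
    simp only [abs_sub_comm _ (c : ℝ), sum_Icc_abs_sub (mem_Icc.1 hc).2]
  have hsum (x : ℝ) (n : ℕ) :
      ∑ c ∈ Icc 1 n, (x - c) * ((c : ℝ) ^ 2 - (k + 1) * c + k * (k + 1) / 2)
        = x * (n * (n + 1) * (2 * n + 1) / 6 - (k + 1) * (n * (n + 1) / 2) + k * (k + 1) / 2 * n)
          - ((n * (n + 1) / 2) ^ 2 - (k + 1) * (n * (n + 1) * (2 * n + 1) / 6)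
            + k * (k + 1) / 2 * (n * (n + 1) / 2)) := by
    apply sum_Icc_one_induction <;> intros <;> push_cast <;> ring
  rw [sum_congr rfl hg, sum_Icc_abs_sub_mul hb, hsum, hsum]
  ring

theorem sum_Icc_abs_sub_mul_abs_sub_mul_abs_sub (k : ℕ) :
    ∑ a ∈ Icc 1 k, ∑ b ∈ Icc 1 k, ∑ c ∈ Icc 1 k, ∑ d ∈ Icc 1 k,
      |(b : ℝ) - a| * |(c : ℝ) - b| * |(d : ℝ) - c|
      = (k : ℝ) * (k - 1) * (k + 1) * (17 * k ^ 4 - 39 * k ^ 2 + 24) / 420 := by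
  have hfactor : ∀ b ∈ Icc 1 k, ∑ a ∈ Icc 1 k, ∑ c ∈ Icc 1 k, ∑ d ∈ Icc 1 k,
      |(b : ℝ) - a| * |(c : ℝ) - b| * |(d : ℝ) - c|
      = ((b : ℝ) ^ 2 - (k + 1) * b + k * (k + 1) / 2)
        * (((2 * b - k - 1) ^ 4 + (6 * k ^ 2 - 10) * (2 * b - k - 1) ^ 2 + 9 * (k ^ 2 - 1) ^ 2)
          / 96) := by
    intro b hb
    rw [← sum_Icc_abs_sub (mem_Icc.1 hb).2, ← sum_Icc_abs_sub_mul_sum_abs_sub (mem_Icc.1 hb).2,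
      sum_mul]
    simp only [mul_sum, mul_assoc]
  have hsum (n : ℕ) : ∑ b ∈ Icc 1 n, ((b : ℝ) ^ 2 - (k + 1) * b + k * (k + 1) / 2)
        * (((2 * b - k - 1) ^ 4 + (6 * k ^ 2 - 10) * (2 * b - k - 1) ^ 2 + 9 * (k ^ 2 - 1) ^ 2)
          / 96)
      = (10 * (n : ℝ) ^ 7 - 35 * k * n ^ 6 + (77 * k ^ 2 - 56) * n ^ 5
        + (140 * k - 105 * k ^ 3) * n ^ 4 + (105 * k ^ 4 - 210 * k ^ 2 + 70) * n ^ 3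
        + (175 * k ^ 3 - 70 * k ^ 5 - 105 * k) * n ^ 2
        + (35 * k ^ 6 - 105 * k ^ 4 + 98 * k ^ 2 - 24) * n) / 420 := by
    apply sum_Icc_one_induction <;> intros <;> push_cast <;> ring
  rw [sum_comm, sum_congr rfl hfactor, hsum]
  ring

theorem cross_moment_T0111_uniform_general
    {Ω : Type*} [MeasurableSpace Ω] (μ : Measure Ω)
    (k : ℕ) (x : Fin 4 → Ω → ℕ)
    (hmeas : ∀ i, Measurable (x i))
    (hdist : ∀ i, Measure.map (x i) μ = unifMeasure k)
    (hindep : iIndepFun x μ) :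
    ∫ ω, |(x 1 ω : ℝ) - (x 0 ω : ℝ)| * |(x 2 ω : ℝ) - (x 1 ω : ℝ)|
        * |(x 3 ω : ℝ) - (x 2 ω : ℝ)| ∂μ
      = ((k : ℝ) - 1) * ((k : ℝ) + 1)
          * (17 * (k : ℝ) ^ 4 - 39 * (k : ℝ) ^ 2 + 24) / (420 * (k : ℝ) ^ 3) := by
  have hlaw := hindep.map_tuple_eq_prod_map hmeas
  simp only [hdist] at hlaw
  let F : ℕ × ℕ × ℕ × ℕ → ℝ := fun p =>
    |(p.2.1 : ℝ) - p.1| * |(p.2.2.1 : ℝ) - p.2.1| * |(p.2.2.2 : ℝ) - p.2.2.1|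
  have hF : ∫ ω, F (x 0 ω, x 1 ω, x 2 ω, x 3 ω) ∂μ = ∫ p, F p ∂(unifMeasure k).prod
      ((unifMeasure k).prod ((unifMeasure k).prod (unifMeasure k))) := by
    rw [← hlaw, integral_map (by fun_prop) (measurable_of_countable F).aestronglyMeasurable]
  -- each factor of the product adds one level of integrability side conditions for `simp`
  simp (maxDischargeDepth := 4) only [F, integral_unifMeasure_prod, integrable_unifMeasure_prod,
    integrable_unifMeasure, implies_true, integral_unifMeasure, ← smul_sum] at hF
  rw [hF, sum_Icc_abs_sub_mul_abs_sub_mul_abs_sub, smul_smul, smul_smul, smul_smul, smul_eq_mul]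
  field_simp

theorem cross_moment_T0111_uniform
    {Ω : Type*} [MeasurableSpace Ω] (μ : Measure Ω) [IsProbabilityMeasure μ]
    (k : ℕ) (hk : 2 ≤ k) (x : Fin 4 → Ω → ℕ)
    (hmeas : ∀ i, Measurable (x i))
    (hdist : ∀ i, Measure.map (x i) μ = unifMeasure k)
    (hindep : iIndepFun x μ) :
    ∫ ω, |(x 1 ω : ℝ) - (x 0 ω : ℝ)| * |(x 2 ω : ℝ) - (x 1 ω : ℝ)|
        * |(x 3 ω : ℝ) - (x 2 ω : ℝ)| ∂μ
      = ((k : ℝ) - 1) * ((k : ℝ) + 1)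
          * (17 * (k : ℝ) ^ 4 - 39 * (k : ℝ) ^ 2 + 24) / (420 * (k : ℝ) ^ 3) :=
  cross_moment_T0111_uniform_general μ k x hmeas hdist hindep
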